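/- Let 0 < a < b < 1, 0 < δ < 1, ρ > 1, and let (c_n) be a bounded sequence of complex numbers satisfying: (i) ∑_{n=1}^N |c_n| ≤ C N^{1−a} for all N of the form ⌊ρ^k⌋; and (ii) ∑_{k} N_k^{2a−1−b} ∑_{m=1}^{⌊N_k^b⌋} |∑_{n=⌈N_k^{1−δ}⌉}^{N_k−m} c_{n+m} \overline{c_n}| < ∞ where N_k = ⌊ρ^k⌋. Then for every measure-preserving system (X, μ, T) and every f ∈ L²(X, μ), ∑_{k} ‖N_k^{a−1} ∑_{n=1}^{N_k} c_n (f ∘ T^n)‖²_{L²(X)} < ∞. -/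

import Mathlib

/-!
Put `F n = f ∘ T^[n]` in `L²(μ)`. As `T` preserves `μ`, the correlation `⟪F (n + d), F n⟫`
depends only on the lag `d`, so the Hilbert-space van der Corput inequality with window
`M = ⌊N ^ b⌋` bounds `‖∑_{N ^ (1 - δ) < n ≤ N} c n • F n‖²` by `N ^ (1 - b) ‖f‖²` times the
diagonal sum `∑ ‖c n‖²` plus the lag sums `∑_{d ≤ M} ‖∑ c (n + d) conj (c n)‖`. After the
normalisation by `N ^ (2a - 2)`, the diagonal contributes `O(N ^ (a - b))` by boundedness and (i),
and the lag sums give exactly the `k`-th term of the series (ii). The initial segment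
`n ≤ N ^ (1 - δ)` contributes `O(N ^ (-2δ(1 - a)))`, because (i) extends from the lacunary lengths
`N_k` to all lengths at the cost of a factor `ρ ^ (1 - a)`. Both error terms are summable along
`N_k = ⌊ρ ^ k⌋`, which grows geometrically.
-/

open Finset MeasureTheory
open scoped InnerProductSpace

theorem sum_Ioc_comp_sub_of_support {A : Type*} [AddCommMonoid A] {g : ℕ → A} {R K : ℕ}
    (hg : ∀ n, n ∉ Ioc R K → g n = 0) {m L : ℕ} (hL : K + m ≤ L) :
    ∑ j ∈ Ioc R L, g (j - m) = ∑ n ∈ Ioc R K, g n := by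
  have hshift : ∑ j ∈ Ioc (R + m) (K + m), g (j - m) = ∑ n ∈ Ioc R K, g n := by
    rw [← map_add_right_Ioc, sum_map]
    simp
  rw [← hshift]
  symm
  refine sum_subset (fun j hj => by simp only [mem_Ioc] at hj ⊢; omega) fun j _ hj => hg _ ?_
  simp only [mem_Ioc] at hj ⊢
  omega

theorem div_two_le_natFloor {y : ℝ} (hy : 1 ≤ y) : y / 2 ≤ ⌊y⌋₊ := by
  rcases le_or_gt 2 y with h | h
  · linarith [Nat.sub_one_lt_floor y]
  · have : (1 : ℝ) ≤ ⌊y⌋₊ := by exact_mod_cast Nat.le_floor (by exact_mod_cast hy)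
    linarith

theorem natCeil_sub_one_le {y : ℝ} (hy : 0 ≤ y) : ((⌈y⌉₊ - 1 : ℕ) : ℝ) ≤ y :=
  (Nat.cast_le.mpr (Nat.sub_le_of_le_add (Nat.ceil_le_floor_add_one y))).trans (Nat.floor_le hy)

theorem add_div_natFloor_rpow_le {b : ℝ} (hb0 : 0 ≤ b) (hb1 : b ≤ 1) {N : ℕ} (hN : 1 ≤ N) :
    (N + ⌊(N : ℝ) ^ b⌋₊) / ⌊(N : ℝ) ^ b⌋₊ ≤ 4 * (N : ℝ) ^ (1 - b) := by
  have hx : (1 : ℝ) ≤ N := by exact_mod_cast hN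
  have hxb : 1 ≤ (N : ℝ) ^ b := Real.one_le_rpow hx hb0
  have hMN : (⌊(N : ℝ) ^ b⌋₊ : ℝ) ≤ N :=
    (Nat.floor_le (by positivity)).trans (Real.rpow_le_self_of_one_le hx hb1)
  calc (N + ⌊(N : ℝ) ^ b⌋₊) / ⌊(N : ℝ) ^ b⌋₊ ≤ (2 * N) / ((N : ℝ) ^ b / 2) :=
        div_le_div₀ (by positivity) (by linarith) (by positivity) (div_two_le_natFloor hxb)
    _ = 4 * (N : ℝ) ^ (1 - b) := by
        rw [Real.rpow_sub (by positivity), Real.rpow_one]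
        field_simp
        ring

section InnerProductSpace

variable {𝕜 E : Type*} [RCLike 𝕜] [NormedAddCommGroup E] [InnerProductSpace 𝕜 E]

omit [InnerProductSpace 𝕜 E] in
theorem norm_sum_sq_le_card_mul {ι : Type*} (s : Finset ι) (v : ι → E) :
    ‖∑ j ∈ s, v j‖ ^ 2 ≤ #s * ∑ j ∈ s, ‖v j‖ ^ 2 :=
  (pow_le_pow_left₀ (norm_nonneg _) (norm_sum_le s v) 2).trans sq_sum_le_card_mul_sum_sq

theorem sum_norm_sum_sq_le_sum_norm_sum_inner {ι κ : Type*} (s : Finset ι) (t : Finset κ)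
    (w : ι → κ → E) :
    ∑ j ∈ s, ‖∑ m ∈ t, w j m‖ ^ 2 ≤ ∑ m ∈ t, ∑ m' ∈ t, ‖∑ j ∈ s, ⟪w j m, w j m'⟫_𝕜‖ := by
  have hexpand : ∀ j, ‖∑ m ∈ t, w j m‖ ^ 2 = RCLike.re (∑ m ∈ t, ∑ m' ∈ t, ⟪w j m, w j m'⟫_𝕜) := by
    intro j
    rw [← inner_self_eq_norm_sq (𝕜 := 𝕜), sum_inner]
    simp only [inner_sum]
  calc ∑ j ∈ s, ‖∑ m ∈ t, w j m‖ ^ 2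
      = RCLike.re (∑ m ∈ t, ∑ m' ∈ t, ∑ j ∈ s, ⟪w j m, w j m'⟫_𝕜) := by
        simp only [hexpand, ← map_sum]
        rw [sum_comm]
        exact congrArg _ (sum_congr rfl fun _ _ => sum_comm)
    _ ≤ ‖∑ m ∈ t, ∑ m' ∈ t, ∑ j ∈ s, ⟪w j m, w j m'⟫_𝕜‖ := RCLike.re_le_norm _
    _ ≤ ∑ m ∈ t, ∑ m' ∈ t, ‖∑ j ∈ s, ⟪w j m, w j m'⟫_𝕜‖ :=
        (norm_sum_le _ _).trans (sum_le_sum fun _ _ => norm_sum_le _ _)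

theorem sum_range_dist_le {s : ℕ → ℝ} (hs : ∀ d, 0 ≤ s d) {M m : ℕ} (hm : m < M) :
    ∑ m' ∈ range M, s (Nat.dist m m') ≤ s 0 + 2 * ∑ d ∈ Icc 1 (M - 1), s d := by
  have hlow : ∑ m' ∈ range (m + 1), s (Nat.dist m m') = s 0 + ∑ d ∈ Icc 1 m, s d := by
    rw [← sum_range_reflect, range_eq_Ico, sum_eq_sum_Ico_succ_bot (Nat.succ_pos m),
      zero_add, Nat.succ_eq_add_one, Ico_add_one_right_eq_Icc]
    refine congrArg₂ _ (by simp [Nat.dist]) (sum_congr rfl fun d hd => ?_)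
    simp only [mem_Icc] at hd
    congr 1
    simp only [Nat.dist]
    omega
  have hhigh : ∑ m' ∈ Ico (m + 1) M, s (Nat.dist m m') = ∑ d ∈ Ico 1 (M - m), s d := by
    rw [sum_Ico_eq_sum_range, sum_Ico_eq_sum_range, show M - m - 1 = M - (m + 1) by omega]
    refine sum_congr rfl fun k _ => congrArg s ?_
    simp only [Nat.dist]
    omega
  rw [range_eq_Ico, ← sum_Ico_consecutive _ (Nat.zero_le (m + 1)) hm, ← range_eq_Ico, hlow, hhigh]
  have h1 : ∑ d ∈ Icc 1 m, s d ≤ ∑ d ∈ Icc 1 (M - 1), s d :=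
    sum_le_sum_of_subset_of_nonneg (Icc_subset_Icc_right (by omega)) fun d _ _ => hs d
  have h2 : ∑ d ∈ Ico 1 (M - m), s d ≤ ∑ d ∈ Icc 1 (M - 1), s d :=
    sum_le_sum_of_subset_of_nonneg (fun d => by simp only [mem_Ico, mem_Icc]; omega)
      fun d _ _ => hs d
  linarith

theorem sum_Ioc_inner_sub_sub_of_support {v : ℕ → E} {R N : ℕ}
    (hv : ∀ n, n ∉ Ioc R N → v n = 0) {m d M : ℕ} (hmd : m + d ≤ M) :
    ∑ j ∈ Ioc R (N + M), ⟪v (j - m), v (j - (m + d))⟫_𝕜 =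
      ∑ n ∈ Ioc R (N - d), ⟪v (n + d), v n⟫_𝕜 := by
  have hsupp : ∀ n, n ∉ Ioc R (N - d) → ⟪v (n + d), v n⟫_𝕜 = 0 := by
    intro n hn
    by_cases hn' : n ∈ Ioc R N
    · rw [hv (n + d) (by simp only [mem_Ioc] at hn hn' ⊢; omega), inner_zero_left]
    · rw [hv n hn', inner_zero_right]
  calc ∑ j ∈ Ioc R (N + M), ⟪v (j - m), v (j - (m + d))⟫_𝕜
      = ∑ j ∈ Ioc R (N + M), ⟪v (j - (m + d) + d), v (j - (m + d))⟫_𝕜 := by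
        refine sum_congr rfl fun j _ => ?_
        rcases le_or_gt (m + d) j with hj | hj
        · congr 2; omega
        · rw [show j - (m + d) = 0 by omega, hv 0 (by simp), inner_zero_right, inner_zero_right]
    _ = ∑ n ∈ Ioc R (N - d), ⟪v (n + d), v n⟫_𝕜 := sum_Ioc_comp_sub_of_support hsupp (by omega)

theorem norm_sum_Ioc_sq_le_vanDerCorput_of_support {v : ℕ → E} {R N : ℕ}
    (hv : ∀ n, n ∉ Ioc R N → v n = 0) {M : ℕ} (hM : 0 < M) :
    ‖∑ n ∈ Ioc R N, v n‖ ^ 2 ≤ (N + M) / M *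
      (∑ n ∈ Ioc R N, ‖v n‖ ^ 2 +
        2 * ∑ d ∈ Icc 1 (M - 1), ‖∑ n ∈ Ioc R (N - d), ⟪v (n + d), v n⟫_𝕜‖) := by
  set corr : ℕ → ℝ := fun d => ‖∑ n ∈ Ioc R (N - d), ⟪v (n + d), v n⟫_𝕜‖ with hcorr_def
  -- Backward windows `j - m` keep every index in `ℕ`: for `j < m` the truncated `j - m = 0`
  -- lies outside the support of `v`.
  set J := Ioc R (N + M)
  have hwindow : ∀ m ∈ range M, ∑ j ∈ J, v (j - m) = ∑ n ∈ Ioc R N, v n := fun m hm =>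
    sum_Ioc_comp_sub_of_support hv (by simp only [mem_range] at hm; omega)
  have hlag : ∀ m ∈ range M, ∀ m' ∈ range M,
      ‖∑ j ∈ J, ⟪v (j - m), v (j - m')⟫_𝕜‖ = corr (Nat.dist m m') := by
    intro m hm m' hm'
    simp only [mem_range] at hm hm'
    rcases le_total m m' with h | h
    · obtain ⟨d, rfl⟩ := Nat.exists_eq_add_of_le h
      rw [sum_Ioc_inner_sub_sub_of_support hv hm'.le,
        show Nat.dist m (m + d) = d by simp [Nat.dist]]
    · obtain ⟨d, rfl⟩ := Nat.exists_eq_add_of_le h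
      rw [← RCLike.norm_conj, map_sum]
      simp only [inner_conj_symm]
      rw [sum_Ioc_inner_sub_sub_of_support hv hm.le,
        show Nat.dist (m' + d) m' = d by simp [Nat.dist]]
  have hcorr_zero : corr 0 = ∑ n ∈ Ioc R N, ‖v n‖ ^ 2 := by
    simp only [hcorr_def, add_zero, Nat.sub_zero, inner_self_eq_norm_sq_to_K]
    norm_cast
    exact Real.norm_of_nonneg (sum_nonneg fun _ _ => sq_nonneg _)
  have hJ : (#J : ℝ) ≤ N + M := by
    rw [Nat.card_Ioc]; exact_mod_cast Nat.sub_le _ _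
  have key : (M : ℝ) ^ 2 * ‖∑ n ∈ Ioc R N, v n‖ ^ 2 ≤
      (N + M) * (M * (corr 0 + 2 * ∑ d ∈ Icc 1 (M - 1), corr d)) := by
    calc (M : ℝ) ^ 2 * ‖∑ n ∈ Ioc R N, v n‖ ^ 2
        = ‖∑ j ∈ J, ∑ m ∈ range M, v (j - m)‖ ^ 2 := by
          rw [sum_comm, sum_congr rfl hwindow, sum_const, card_range, ← Nat.cast_smul_eq_nsmul 𝕜,
            norm_smul, mul_pow, RCLike.norm_natCast]
      _ ≤ #J * ∑ j ∈ J, ‖∑ m ∈ range M, v (j - m)‖ ^ 2 := norm_sum_sq_le_card_mul _ _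
      _ ≤ (N + M) * ∑ m ∈ range M, ∑ m' ∈ range M, corr (Nat.dist m m') := by
          refine mul_le_mul hJ ?_ (sum_nonneg fun _ _ => sq_nonneg _) (by positivity)
          refine (sum_norm_sum_sq_le_sum_norm_sum_inner (𝕜 := 𝕜) J (range M)
            (fun j m => v (j - m))).trans_eq ?_
          exact sum_congr rfl fun m hm => sum_congr rfl fun m' hm' => hlag m hm m' hm'
      _ ≤ (N + M) * ∑ m ∈ range M, (corr 0 + 2 * ∑ d ∈ Icc 1 (M - 1), corr d) := by
          gcongr with m hm
          exact sum_range_dist_le (s := corr) (fun _ => norm_nonneg _) (mem_range.mp hm)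
      _ = (N + M) * (M * (corr 0 + 2 * ∑ d ∈ Icc 1 (M - 1), corr d)) := by
          rw [sum_const, card_range, nsmul_eq_mul]
  have hM' : (0 : ℝ) < M := Nat.cast_pos.mpr hM
  rw [← hcorr_zero, div_mul_eq_mul_div, le_div_iff₀ hM']
  nlinarith

theorem norm_sum_Ioc_sq_le_vanDerCorput (u : ℕ → E) (R N : ℕ) {M : ℕ} (hM : 0 < M) :
    ‖∑ n ∈ Ioc R N, u n‖ ^ 2 ≤ (N + M) / M *
      (∑ n ∈ Ioc R N, ‖u n‖ ^ 2 +
        2 * ∑ d ∈ Icc 1 (M - 1), ‖∑ n ∈ Ioc R (N - d), ⟪u (n + d), u n⟫_𝕜‖) := by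
  set v : ℕ → E := fun n => if n ∈ Ioc R N then u n else 0
  have hvu : ∀ n ∈ Ioc R N, v n = u n := fun n hn => if_pos hn
  have hlag : ∀ d, ∑ n ∈ Ioc R (N - d), ⟪v (n + d), v n⟫_𝕜 =
      ∑ n ∈ Ioc R (N - d), ⟪u (n + d), u n⟫_𝕜 := fun d => by
    refine sum_congr rfl fun n hn => ?_
    simp only [mem_Ioc] at hn
    rw [hvu n (by simp only [mem_Ioc]; omega), hvu (n + d) (by simp only [mem_Ioc]; omega)]
  have h := norm_sum_Ioc_sq_le_vanDerCorput_of_support (𝕜 := 𝕜) (v := v) (fun n hn => if_neg hn) hM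
  have hdiag : ∑ n ∈ Ioc R N, ‖v n‖ ^ 2 = ∑ n ∈ Ioc R N, ‖u n‖ ^ 2 :=
    sum_congr rfl fun n hn => by rw [hvu n hn]
  simpa only [sum_congr rfl hvu, hdiag, hlag] using h

section Stationary

variable {F : ℕ → E} (hF : ∀ n d, ⟪F (n + d), F n⟫_𝕜 = ⟪F d, F 0⟫_𝕜)
include hF

theorem norm_eq_norm_zero_of_stationary (n : ℕ) : ‖F n‖ = ‖F 0‖ := by
  have h := congrArg RCLike.re (hF n 0)
  rw [add_zero, inner_self_eq_norm_sq, inner_self_eq_norm_sq] at h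
  exact (pow_left_inj₀ (norm_nonneg _) (norm_nonneg _) two_ne_zero).mp h

theorem norm_inner_le_of_stationary (d : ℕ) : ‖⟪F d, F 0⟫_𝕜‖ ≤ ‖F 0‖ ^ 2 :=
  (norm_inner_le_norm _ _).trans_eq (by rw [norm_eq_norm_zero_of_stationary hF d, sq])

theorem norm_sum_Ioc_smul_sq_le_of_stationary (c : ℕ → 𝕜) (R N : ℕ) {M : ℕ} (hM : 0 < M) :
    ‖∑ n ∈ Ioc R N, c n • F n‖ ^ 2 ≤ (N + M) / M * (‖F 0‖ ^ 2 *
      (∑ n ∈ Ioc R N, ‖c n‖ ^ 2 +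
        2 * ∑ d ∈ Icc 1 (M - 1), ‖∑ n ∈ Ioc R (N - d), c (n + d) * starRingEnd 𝕜 (c n)‖)) := by
  have hdiag : ∀ n, ‖c n • F n‖ ^ 2 = ‖F 0‖ ^ 2 * ‖c n‖ ^ 2 := fun n => by
    rw [norm_smul, norm_eq_norm_zero_of_stationary hF, mul_pow, mul_comm]
  have hlag : ∀ d, ‖∑ n ∈ Ioc R (N - d), ⟪c (n + d) • F (n + d), c n • F n⟫_𝕜‖ ≤
      ‖F 0‖ ^ 2 * ‖∑ n ∈ Ioc R (N - d), c (n + d) * starRingEnd 𝕜 (c n)‖ := fun d => by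
    have hterm : ∀ n, ⟪c (n + d) • F (n + d), c n • F n⟫_𝕜 =
        starRingEnd 𝕜 (c (n + d) * starRingEnd 𝕜 (c n)) * ⟪F (n + d), F n⟫_𝕜 := fun n => by
      rw [inner_smul_left, inner_smul_right, map_mul, RCLike.conj_conj]
      ring
    simp only [hterm, hF _ d, ← sum_mul, ← map_sum, norm_mul, RCLike.norm_conj,
      mul_comm (‖F 0‖ ^ 2)]
    exact mul_le_mul_of_nonneg_left (norm_inner_le_of_stationary hF d) (norm_nonneg _)
  refine (norm_sum_Ioc_sq_le_vanDerCorput (𝕜 := 𝕜) _ R N hM).trans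
    (mul_le_mul_of_nonneg_left ?_ (by positivity))
  calc ∑ n ∈ Ioc R N, ‖c n • F n‖ ^ 2 +
        2 * ∑ d ∈ Icc 1 (M - 1), ‖∑ n ∈ Ioc R (N - d), ⟪c (n + d) • F (n + d), c n • F n⟫_𝕜‖
      ≤ ∑ n ∈ Ioc R N, ‖F 0‖ ^ 2 * ‖c n‖ ^ 2 + 2 * ∑ d ∈ Icc 1 (M - 1),
          ‖F 0‖ ^ 2 * ‖∑ n ∈ Ioc R (N - d), c (n + d) * starRingEnd 𝕜 (c n)‖ := by
        gcongr with n _ d _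
        · exact (hdiag n).le
        · exact hlag d
    _ = _ := by rw [← mul_sum, ← mul_sum]; ring

theorem norm_sum_Icc_smul_sq_le_of_stationary {c : ℕ → 𝕜} {B : ℝ} (hB : ∀ n, ‖c n‖ ≤ B)
    {R N M : ℕ} (hRN : R ≤ N) (hM : 0 < M) :
    ‖∑ n ∈ Icc 1 N, c n • F n‖ ^ 2 ≤ 2 * (‖F 0‖ * ∑ n ∈ Icc 1 R, ‖c n‖) ^ 2 +
      2 * ((N + M) / M * (‖F 0‖ ^ 2 * (B * ∑ n ∈ Icc 1 N, ‖c n‖ +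
        2 * ∑ m ∈ Icc 1 M, ‖∑ n ∈ Ioc R (N - m), c (n + m) * starRingEnd 𝕜 (c n)‖))) := by
  have hsplit : ∑ n ∈ Icc 1 N, c n • F n = ∑ n ∈ Icc 1 R, c n • F n + ∑ n ∈ Ioc R N, c n • F n := by
    have hIcc : ∀ K : ℕ, Icc 1 K = Ioc 0 K := Icc_add_one_left_eq_Ioc 0
    rw [hIcc, hIcc, sum_Ioc_consecutive _ (Nat.zero_le R) hRN]
  have hinit : ‖∑ n ∈ Icc 1 R, c n • F n‖ ≤ ‖F 0‖ * ∑ n ∈ Icc 1 R, ‖c n‖ := by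
    refine (norm_sum_le _ _).trans_eq ?_
    simp only [norm_smul, norm_eq_norm_zero_of_stationary hF, mul_sum, mul_comm]
  have hdiag : ∑ n ∈ Ioc R N, ‖c n‖ ^ 2 ≤ B * ∑ n ∈ Icc 1 N, ‖c n‖ := by
    rw [mul_sum]
    refine (sum_le_sum fun n _ => ?_).trans (sum_le_sum_of_subset_of_nonneg ?_ fun n _ _ => ?_)
    · rw [sq]; exact mul_le_mul_of_nonneg_right (hB n) (norm_nonneg _)
    · intro n; simp only [mem_Ioc, mem_Icc]; omega
    · exact mul_nonneg ((norm_nonneg _).trans (hB 0)) (norm_nonneg _)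
  have hlag : ∑ d ∈ Icc 1 (M - 1), ‖∑ n ∈ Ioc R (N - d), c (n + d) * starRingEnd 𝕜 (c n)‖ ≤
      ∑ m ∈ Icc 1 M, ‖∑ n ∈ Ioc R (N - m), c (n + m) * starRingEnd 𝕜 (c n)‖ :=
    sum_le_sum_of_subset_of_nonneg (Icc_subset_Icc_right (Nat.sub_le M 1))
      fun _ _ _ => norm_nonneg _
  calc ‖∑ n ∈ Icc 1 N, c n • F n‖ ^ 2
      ≤ 2 * ‖∑ n ∈ Icc 1 R, c n • F n‖ ^ 2 + 2 * ‖∑ n ∈ Ioc R N, c n • F n‖ ^ 2 := by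
        rw [hsplit, ← mul_add]
        exact (pow_le_pow_left₀ (norm_nonneg _) (norm_add_le _ _) 2).trans add_sq_le
    _ ≤ _ := by
        gcongr
        refine (norm_sum_Ioc_smul_sq_le_of_stationary hF c R N hM).trans ?_
        gcongr

end Stationary

theorem rpow_sq_mul_norm_sum_smul_sq_le {a b δ B C : ℝ} (ha : a < 1) (hb0 : 0 < b) (hb1 : b ≤ 1)
    (hδ : 0 ≤ δ) {F : ℕ → E} (hF : ∀ n d, ⟪F (n + d), F n⟫_𝕜 = ⟪F d, F 0⟫_𝕜) {c : ℕ → 𝕜}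
    (hB : ∀ n, ‖c n‖ ≤ B) (hC : ∀ L : ℕ, ∑ n ∈ Icc 1 L, ‖c n‖ ≤ C * (L : ℝ) ^ (1 - a))
    {N : ℕ} (hN : 1 ≤ N) :
    ((N : ℝ) ^ (a - 1)) ^ 2 * ‖∑ n ∈ Icc 1 N, c n • F n‖ ^ 2 ≤
      2 * (‖F 0‖ * C) ^ 2 * (N : ℝ) ^ (-(2 * δ * (1 - a))) +
        8 * ‖F 0‖ ^ 2 * B * C * (N : ℝ) ^ (a - b) +
        16 * ‖F 0‖ ^ 2 * ((N : ℝ) ^ (2 * a - 1 - b) *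
          ∑ m ∈ Icc 1 ⌊(N : ℝ) ^ b⌋₊,
            ‖∑ n ∈ Icc ⌈(N : ℝ) ^ (1 - δ)⌉₊ (N - m), c (n + m) * starRingEnd 𝕜 (c n)‖) := by
  have hx : (1 : ℝ) ≤ N := by exact_mod_cast hN
  have hx0 : (0 : ℝ) < N := by positivity
  have hB0 : 0 ≤ B := (norm_nonneg _).trans (hB 0)
  have hC0 : 0 ≤ C := (norm_nonneg _).trans (by simpa using hC 1)
  set R := ⌈(N : ℝ) ^ (1 - δ)⌉₊ - 1
  set M := ⌊(N : ℝ) ^ b⌋₊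
  set H := ∑ m ∈ Icc 1 M,
    ‖∑ n ∈ Icc ⌈(N : ℝ) ^ (1 - δ)⌉₊ (N - m), c (n + m) * starRingEnd 𝕜 (c n)‖
  have hR : (R : ℝ) ≤ (N : ℝ) ^ (1 - δ) := natCeil_sub_one_le (by positivity)
  have hRN : R ≤ N := by
    exact_mod_cast hR.trans (Real.rpow_le_self_of_one_le hx (by linarith))
  have hM : 0 < M := Nat.floor_pos.mpr (Real.one_le_rpow hx hb0.le)
  have hcorr : ∑ m ∈ Icc 1 M, ‖∑ n ∈ Ioc R (N - m), c (n + m) * starRingEnd 𝕜 (c n)‖ = H := by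
    have hR1 : R + 1 = ⌈(N : ℝ) ^ (1 - δ)⌉₊ :=
      Nat.sub_add_cancel (Nat.ceil_pos.mpr (by positivity))
    simp only [H, ← hR1, Icc_add_one_left_eq_Ioc]
  have hinit : ∑ n ∈ Icc 1 R, ‖c n‖ ≤ C * (N : ℝ) ^ ((1 - δ) * (1 - a)) := by
    refine (hC R).trans (mul_le_mul_of_nonneg_left ?_ hC0)
    rw [Real.rpow_mul hx0.le]
    exact Real.rpow_le_rpow (Nat.cast_nonneg _) hR (by linarith)
  have e₁ : ((N : ℝ) ^ (a - 1)) ^ 2 * ((N : ℝ) ^ ((1 - δ) * (1 - a))) ^ 2 =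
      (N : ℝ) ^ (-(2 * δ * (1 - a))) := by
    simp only [sq, ← Real.rpow_add hx0]; ring_nf
  have e₂ : ((N : ℝ) ^ (a - 1)) ^ 2 * ((N : ℝ) ^ (1 - b) * (N : ℝ) ^ (1 - a)) =
      (N : ℝ) ^ (a - b) := by
    simp only [sq, ← Real.rpow_add hx0]; ring_nf
  have e₃ : ((N : ℝ) ^ (a - 1)) ^ 2 * (N : ℝ) ^ (1 - b) = (N : ℝ) ^ (2 * a - 1 - b) := by
    simp only [sq, ← Real.rpow_add hx0]; ring_nf
  refine (mul_le_mul_of_nonneg_left (norm_sum_Icc_smul_sq_le_of_stationary hF hB hRN hM)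
    (by positivity)).trans ?_
  rw [hcorr]
  calc _ ≤ ((N : ℝ) ^ (a - 1)) ^ 2 * (2 * (‖F 0‖ * (C * (N : ℝ) ^ ((1 - δ) * (1 - a)))) ^ 2 +
        2 * (4 * (N : ℝ) ^ (1 - b) * (‖F 0‖ ^ 2 * (B * (C * (N : ℝ) ^ (1 - a)) + 2 * H)))) := by
        gcongr
        · exact add_div_natFloor_rpow_le hb0.le hb1 hN
        · exact hC N
    _ = _ := by
        rw [← e₁, ← e₂, ← e₃]
        ring

end InnerProductSpace

section Lacunary

variable {ρ : ℝ}

theorem one_le_floor_pow (hρ : 1 ≤ ρ) (k : ℕ) : 1 ≤ ⌊ρ ^ k⌋₊ :=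
  Nat.le_floor (by exact_mod_cast one_le_pow₀ hρ)

theorem summable_floor_pow_rpow (hρ : 1 < ρ) {e : ℝ} (he : e < 0) :
    Summable fun k : ℕ => (⌊ρ ^ k⌋₊ : ℝ) ^ e := by
  have hρ0 : 0 < ρ := zero_lt_one.trans hρ
  have hbound : ∀ k : ℕ, (⌊ρ ^ k⌋₊ : ℝ) ^ e ≤ 2 ^ (-e) * (ρ ^ e) ^ k := fun k => by
    have hk : 1 ≤ ρ ^ k := one_le_pow₀ hρ.le
    calc (⌊ρ ^ k⌋₊ : ℝ) ^ e ≤ (ρ ^ k / 2) ^ e :=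
          Real.rpow_le_rpow_of_nonpos (by positivity) (div_two_le_natFloor hk) he.le
      _ = 2 ^ (-e) * (ρ ^ e) ^ k := by
          rw [Real.div_rpow (by positivity) zero_le_two, Real.rpow_neg zero_le_two,
            ← Real.rpow_natCast, ← Real.rpow_natCast, ← Real.rpow_mul hρ0.le,
            ← Real.rpow_mul hρ0.le, mul_comm (k : ℝ), div_eq_mul_inv, mul_comm]
  refine Summable.of_nonneg_of_le (fun k => by positivity) hbound ?_
  exact (summable_geometric_of_lt_one (by positivity)
    (Real.rpow_lt_one_of_one_lt_of_neg hρ he)).mul_left _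

theorem exists_le_floor_pow_le_mul (hρ : 1 < ρ) {L : ℕ} (hL : 1 ≤ L) :
    ∃ k, L ≤ ⌊ρ ^ k⌋₊ ∧ (⌊ρ ^ k⌋₊ : ℝ) ≤ ρ * L := by
  obtain ⟨k, hk, hk'⟩ := exists_nat_pow_near (by exact_mod_cast hL : (1 : ℝ) ≤ L) hρ
  refine ⟨k + 1, Nat.le_floor hk'.le, (Nat.floor_le (by positivity)).trans ?_⟩
  rw [pow_succ']
  exact mul_le_mul_of_nonneg_left hk (by positivity)

theorem sum_Icc_le_of_floor_pow (hρ : 1 < ρ) {x : ℕ → ℝ} (hx : ∀ n, 0 ≤ x n) {C e : ℝ}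
    (he : 0 ≤ e) (hC : ∀ k : ℕ, ∑ n ∈ Icc 1 ⌊ρ ^ k⌋₊, x n ≤ C * (⌊ρ ^ k⌋₊ : ℝ) ^ e) (L : ℕ) :
    ∑ n ∈ Icc 1 L, x n ≤ C * ρ ^ e * (L : ℝ) ^ e := by
  have hρ0 : 0 < ρ := zero_lt_one.trans hρ
  have hC0 : 0 ≤ C := (hx 1).trans (by simpa using hC 0)
  rcases Nat.eq_zero_or_pos L with rfl | hL
  · simp only [Icc_eq_empty_of_lt zero_lt_one, sum_empty]; positivity
  obtain ⟨k, hLk, hkL⟩ := exists_le_floor_pow_le_mul hρ hL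
  calc ∑ n ∈ Icc 1 L, x n ≤ ∑ n ∈ Icc 1 ⌊ρ ^ k⌋₊, x n :=
        sum_le_sum_of_subset_of_nonneg (Icc_subset_Icc_right hLk) fun n _ _ => hx n
    _ ≤ C * (⌊ρ ^ k⌋₊ : ℝ) ^ e := hC k
    _ ≤ C * (ρ * L) ^ e := by gcongr
    _ = C * ρ ^ e * (L : ℝ) ^ e := by rw [Real.mul_rpow hρ0.le (Nat.cast_nonneg _), mul_assoc]

end Lacunary

section Koopman

variable {𝕜 X : Type*} [RCLike 𝕜] [MeasurableSpace X] {μ : Measure X}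

theorem integral_norm_sq_eq_norm_sq (G : Lp 𝕜 2 μ) : ∫ x, ‖G x‖ ^ 2 ∂μ = ‖G‖ ^ 2 := by
  rw [← inner_self_eq_norm_sq (𝕜 := 𝕜) G, L2.inner_def, ← integral_re (L2.integrable_inner G G)]
  exact integral_congr_ae (.of_forall fun x => (inner_self_eq_norm_sq (𝕜 := 𝕜) _).symm)

variable {T : X → X} (hT : MeasurePreserving T μ μ) {f : X → 𝕜} (hf : MemLp f 2 μ)

noncomputable def orbitLp (n : ℕ) : Lp 𝕜 2 μ :=
  (hf.comp_measurePreserving (hT.iterate n)).toLp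

theorem coeFn_orbitLp (n : ℕ) : orbitLp hT hf n =ᵐ[μ] fun x => f (T^[n] x) :=
  MemLp.coeFn_toLp _

theorem inner_orbitLp_add (n d : ℕ) :
    ⟪orbitLp hT hf (n + d), orbitLp hT hf n⟫_𝕜 = ⟪orbitLp hT hf d, orbitLp hT hf 0⟫_𝕜 := by
  have hshift : ⟪orbitLp hT hf (n + d), orbitLp hT hf n⟫_𝕜 =
      ∫ x, ⟪f (T^[d] (T^[n] x)), f (T^[n] x)⟫_𝕜 ∂μ := by
    refine integral_congr_ae ?_
    filter_upwards [coeFn_orbitLp hT hf (n + d), coeFn_orbitLp hT hf n] with x h₁ h₂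
    rw [h₁, h₂, add_comm n d, Function.iterate_add_apply]
  have hzero : ⟪orbitLp hT hf d, orbitLp hT hf 0⟫_𝕜 = ∫ x, ⟪f (T^[d] x), f x⟫_𝕜 ∂μ := by
    refine integral_congr_ae ?_
    filter_upwards [coeFn_orbitLp hT hf d, coeFn_orbitLp hT hf 0] with x h₁ h₂
    rw [h₁, h₂, Function.iterate_zero_apply]
  have hg : AEStronglyMeasurable (fun y => ⟪f (T^[d] y), f y⟫_𝕜) μ :=
    (hf.comp_measurePreserving (hT.iterate d)).1.inner hf.1
  have hmap := (hT.iterate n).map_eq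
  rw [hshift, hzero, ← integral_map (f := fun y => ⟪f (T^[d] y), f y⟫_𝕜)
    (hT.iterate n).measurable.aemeasurable (by rwa [hmap]), hmap]

theorem coeFn_sum_smul_orbitLp (c : ℕ → 𝕜) (s : Finset ℕ) :
    ⇑(∑ n ∈ s, c n • orbitLp hT hf n) =ᵐ[μ] fun x => ∑ n ∈ s, c n * f (T^[n] x) := by
  filter_upwards [Lp.coeFn_fun_finsetSum s fun n => c n • orbitLp hT hf n,
    ae_all_iff.2 fun n => Lp.coeFn_smul (c n) (orbitLp hT hf n),
    ae_all_iff.2 (coeFn_orbitLp hT hf)] with x hsum hsmul horbit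
  simp only [hsum, hsmul, Pi.smul_apply, horbit, smul_eq_mul]

theorem integral_norm_smul_sum_sq_eq (r : ℝ) (c : ℕ → 𝕜) (s : Finset ℕ) :
    ∫ x, ‖r • ∑ n ∈ s, c n * f (T^[n] x)‖ ^ 2 ∂μ =
      r ^ 2 * ‖∑ n ∈ s, c n • orbitLp hT hf n‖ ^ 2 := by
  rw [← integral_norm_sq_eq_norm_sq, ← integral_const_mul]
  refine integral_congr_ae ?_
  filter_upwards [coeFn_sum_smul_orbitLp hT hf c s] with x hx
  rw [hx, norm_smul, mul_pow, Real.norm_eq_abs, sq_abs]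

end Koopman

theorem weighted_criterion_general (a b δ ρ : ℝ) (hab : a < b) (ha : 0 < a) (hb : b < 1)
    (hδ0 : 0 < δ) (hρ : 1 < ρ)
    (c : ℕ → ℂ) (hbdd : ∃ B, ∀ n, ‖c n‖ ≤ B)
    (hsum : ∃ C, ∀ k : ℕ, ∑ n ∈ Icc 1 (⌊ρ ^ k⌋₊), ‖c n‖ ≤ C * (⌊ρ ^ k⌋₊ : ℝ) ^ (1 - a))
    (hcorr : Summable (fun k : ℕ =>
      (⌊ρ ^ k⌋₊ : ℝ) ^ (2 * a - 1 - b) *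
        ∑ m ∈ Icc 1 (⌊(⌊ρ ^ k⌋₊ : ℝ) ^ b⌋₊),
          ‖∑ n ∈ Icc (⌈(⌊ρ ^ k⌋₊ : ℝ) ^ (1 - δ)⌉₊) (⌊ρ ^ k⌋₊ - m),
              c (n + m) * (starRingEnd ℂ) (c n)‖)) :
    ∀ {X : Type} [MeasurableSpace X] (μ : Measure X) [IsProbabilityMeasure μ]
      (T : X → X), MeasurePreserving T μ μ → ∀ f : X → ℂ, MemLp f 2 μ →
      Summable (fun k : ℕ =>
        ∫ x, ‖((⌊ρ ^ k⌋₊ : ℝ) ^ (a - 1) : ℝ) •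
            ∑ n ∈ Icc 1 (⌊ρ ^ k⌋₊), c n * f (T^[n] x)‖ ^ 2 ∂μ) := by
  intro X _ μ _ T hT f hf
  obtain ⟨B, hB⟩ := hbdd
  obtain ⟨C, hC⟩ := hsum
  have hC' := sum_Icc_le_of_floor_pow hρ (fun n => norm_nonneg (c n)) (by linarith) hC
  have hterm := fun k =>
    (integral_norm_smul_sum_sq_eq hT hf ((⌊ρ ^ k⌋₊ : ℝ) ^ (a - 1)) c _).trans_le
    (rpow_sq_mul_norm_sum_smul_sq_le (hab.trans hb) (ha.trans hab) hb.le hδ0.le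
      (inner_orbitLp_add hT hf) hB hC' (one_le_floor_pow hρ.le k))
  refine Summable.of_nonneg_of_le (fun k => integral_nonneg fun _ => by positivity) hterm ?_
  exact (((summable_floor_pow_rpow hρ (by nlinarith)).mul_left _).add
    ((summable_floor_pow_rpow hρ (by linarith)).mul_left _)).add (hcorr.mul_left _)

theorem weighted_criterion (a b δ ρ : ℝ) (hab : a < b) (ha : 0 < a) (hb : b < 1)
    (hδ0 : 0 < δ) (hδ1 : δ < 1) (hρ : 1 < ρ)
    (c : ℕ → ℂ) (hbdd : ∃ B, ∀ n, ‖c n‖ ≤ B)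
    (hsum : ∃ C, ∀ k : ℕ, ∑ n ∈ Icc 1 (⌊ρ ^ k⌋₊), ‖c n‖ ≤ C * (⌊ρ ^ k⌋₊ : ℝ) ^ (1 - a))
    (hcorr : Summable (fun k : ℕ =>
      (⌊ρ ^ k⌋₊ : ℝ) ^ (2 * a - 1 - b) *
        ∑ m ∈ Icc 1 (⌊(⌊ρ ^ k⌋₊ : ℝ) ^ b⌋₊),
          ‖∑ n ∈ Icc (⌈(⌊ρ ^ k⌋₊ : ℝ) ^ (1 - δ)⌉₊) (⌊ρ ^ k⌋₊ - m),
              c (n + m) * (starRingEnd ℂ) (c n)‖)) :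
    ∀ {X : Type} [MeasurableSpace X] (μ : Measure X) [IsProbabilityMeasure μ]
      (T : X → X), MeasurePreserving T μ μ → ∀ f : X → ℂ, MemLp f 2 μ →
      Summable (fun k : ℕ =>
        ∫ x, ‖((⌊ρ ^ k⌋₊ : ℝ) ^ (a - 1) : ℝ) •
            ∑ n ∈ Icc 1 (⌊ρ ^ k⌋₊), c n * f (T^[n] x)‖ ^ 2 ∂μ) :=
  weighted_criterion_general a b δ ρ hab ha hb hδ0 hρ c hbdd hsum hcorr
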